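/- Let L = ℤ^{r+1} with r ≥ 3, basis e₀,…,e_r, and bilinear form e₀·e₀ = 1, eᵢ·eᵢ = -1 for i ≥ 1, eᵢ·eⱼ = 0 for i ≠ j. Define h₀ = e₀, h₁ = e₀ - e₁, h₂ = 2e₀ - e₁ - e₂, and hᵢ = 3e₀ - e₁ - ⋯ - eᵢ for 3 ≤ i ≤ r. Suppose N = Σᵢ aᵢhᵢ with all aᵢ ≥ 0 integers, N·N = 0, N·h_r = 0, and N ≠ 0. Then r ≥ 9 and N = a₉·h₉ with a₉ > 0 (all other coefficients aᵢ for i ≠ 9 equal 0, after noting h₉ is the unique such combination up to positive multiple). -/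

import Mathlib

/-- The bilinear form of signature (1,r) on ℤ^{r+1}: diag(1,-1,…,-1). -/
def B10 (r : ℕ) (x y : Fin (r + 1) → ℤ) : ℤ :=
  ∑ i : Fin (r + 1), (if i = 0 then x i * y i else -(x i * y i))

/-- The standard classes: h₀ = e₀, h₁ = e₀ - e₁, h₂ = 2e₀ - e₁ - e₂,
and hᵢ = 3e₀ - e₁ - ⋯ - eᵢ for i ≥ 3. -/
def hstd (r : ℕ) (i : Fin (r + 1)) : Fin (r + 1) → ℤ := fun j =>
  if j.val = 0 then (max 1 (min i.val 3) : ℤ)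
  else if j.val ≤ i.val then -1 else 0

/-!
Write `N = ∑ aᵢ hᵢ` as `n e₀ - ∑_{j ≥ 1} dⱼ eⱼ`, where `dⱼ = ∑_{i ≥ j} aᵢ` is a nonincreasing
sequence of nonnegative integers and `n = a₀ + d₁ + d₂ + d₃`. The two conditions read
`∑ dⱼ = 3n` and `∑ dⱼ² = n²`. Bounding the tail by `∑_{j > 3} dⱼ² ≤ d₃ ∑_{j > 3} dⱼ` and using
`d₁ + d₂ + d₃ ≤ n` forces `3d₁ = n`. Then `∑ dⱼ (n - 3dⱼ) = 0` is a sum of nonnegative terms, so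
every `dⱼ` is `0` or `n/3`, and `∑ dⱼ = 3n` leaves exactly `d₁ = ⋯ = d₉ = n/3`: `N = (n/3) h₉`.
-/

open Finset

/-- With `m = n - 3z`: `n m ≤ x (x - z) + y (y - z) ≤ x m`, while `x < n` and `0 ≤ m`. -/
theorem three_mul_eq_of_sq_le {R : Type*} [CommRing R] [LinearOrder R] [IsStrictOrderedRing R]
    {x y z n : R} (hyx : y ≤ x) (hzy : z ≤ y) (hz : 0 < z) (hs : x + y + z ≤ n)
    (hq : n ^ 2 ≤ x ^ 2 + y ^ 2 + z ^ 2 + z * (3 * n - x - y - z)) : 3 * x = n := by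
  have hm : n * (n - 3 * z) ≤ x * (n - 3 * z) := by nlinarith
  have hm0 : n - 3 * z ≤ 0 := by nlinarith
  linarith

section AntitoneSequence

variable {r : ℕ} {n : ℤ} {d : ℕ → ℤ}

theorem sum_range_eq_add_sum_Ico_three {M : Type*} [AddCommMonoid M] (f : ℕ → M) (hr : 3 ≤ r) :
    ∑ j ∈ range r, f j = f 0 + f 1 + f 2 + ∑ j ∈ Ico 3 r, f j := by
  rw [← sum_range_add_sum_Ico f hr, sum_range_succ, sum_range_succ, sum_range_one]

theorem three_mul_head_eq (hr : 3 ≤ r) (hn : 0 < n) (hd : Antitone d) (hnonneg : ∀ j, 0 ≤ d j)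
    (h012 : d 0 + d 1 + d 2 ≤ n) (hsum : ∑ j ∈ range r, d j = 3 * n)
    (hsq : ∑ j ∈ range r, d j ^ 2 = n ^ 2) : 3 * d 0 = n := by
  rw [sum_range_eq_add_sum_Ico_three _ hr] at hsum hsq
  have hle : ∀ j ∈ Ico 3 r, d j ≤ d 2 := fun j hj => hd (by grind)
  have hd2 : 0 < d 2 := by
    by_contra! h
    have : ∑ j ∈ Ico 3 r, d j = 0 :=
      sum_eq_zero fun j hj => le_antisymm ((hle j hj).trans h) (hnonneg j)
    linarith
  have htail : ∑ j ∈ Ico 3 r, d j ^ 2 ≤ d 2 * ∑ j ∈ Ico 3 r, d j := by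
    rw [mul_sum]
    exact sum_le_sum fun j hj => by nlinarith [hle j hj, hnonneg j]
  exact three_mul_eq_of_sq_le (hd zero_le_one) (hd one_le_two) hd2 h012 (by nlinarith)

theorem eq_zero_or_three_mul_eq (hd : Antitone d) (hnonneg : ∀ j, 0 ≤ d j) (h0 : 3 * d 0 = n)
    (hsum : ∑ j ∈ range r, d j = 3 * n) (hsq : ∑ j ∈ range r, d j ^ 2 = n ^ 2) :
    ∀ j < r, d j = 0 ∨ 3 * d j = n := by
  have hterm : ∀ j ∈ range r, 0 ≤ d j * (n - 3 * d j) := fun j _ =>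
    mul_nonneg (hnonneg j) (by linarith [hd (Nat.zero_le j)])
  have hzero : ∑ j ∈ range r, d j * (n - 3 * d j) = 0 := by
    have hexp : ∀ j, d j * (n - 3 * d j) = n * d j - 3 * d j ^ 2 := fun j => by ring
    simp only [hexp, sum_sub_distrib, ← mul_sum, hsum, hsq]
    ring
  intro j hj
  have := (sum_eq_zero_iff_of_nonneg hterm).1 hzero j (mem_range.2 hj)
  rcases mul_eq_zero.1 this with h | h
  · exact .inl h
  · exact .inr (by linarith)

theorem nine_le_and_three_mul_eq (hn : 0 < n) (hd : Antitone d) (hnonneg : ∀ j, 0 ≤ d j)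
    (hdr : ∀ j, r ≤ j → d j = 0) (h0 : 3 * d 0 = n) (hdich : ∀ j < r, d j = 0 ∨ 3 * d j = n)
    (hsum : ∑ j ∈ range r, d j = 3 * n) :
    9 ≤ r ∧ ∀ j, 3 * d j = if j < 9 then n else 0 := by
  have hsum_le : ∀ m, 3 * ∑ j ∈ range m, d j ≤ m * n := fun m => by
    have := sum_le_card_nsmul (range m) d (d 0) fun j _ => hd (Nat.zero_le j)
    rw [card_range, nsmul_eq_mul] at this
    rw [← h0, mul_left_comm]
    exact mul_le_mul_of_nonneg_left this (by norm_num)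
  have hr : 9 ≤ r := by
    have := hsum_le r
    exact_mod_cast le_of_mul_le_mul_right (by linarith : (9 : ℤ) * n ≤ r * n) hn
  have h8 : 3 * d 8 = n := by
    refine (hdich 8 (by omega)).resolve_left fun h8 => ?_
    have : ∑ j ∈ Ico 8 r, d j = 0 :=
      sum_eq_zero fun j hj => le_antisymm (h8 ▸ hd (mem_Ico.1 hj).1) (hnonneg j)
    have := hsum_le 8
    rw [← sum_range_add_sum_Ico d (by omega : 8 ≤ r)] at hsum
    push_cast at this
    linarith
  have hhead : ∀ j < 9, 3 * d j = n := fun j hj => by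
    linarith [hd (Nat.zero_le j), hd (Nat.le_of_lt_succ hj)]
  have htail : ∑ j ∈ Ico 9 r, d j = 0 := by
    have : ∑ j ∈ range 9, d j = 3 * n := by
      have := sum_congr rfl fun j hj => hhead j (mem_range.1 hj)
      rw [← mul_sum, sum_const, card_range, nsmul_eq_mul, Nat.cast_ofNat] at this
      linarith
    rw [← sum_range_add_sum_Ico d hr] at hsum
    linarith
  refine ⟨hr, fun j => ?_⟩
  split_ifs with hj
  · exact hhead j hj
  · rcases lt_or_ge j r with hjr | hjr
    · rw [(sum_eq_zero_iff_of_nonneg fun i _ => hnonneg i).1 htail j (mem_Ico.2 ⟨by omega, hjr⟩),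
        mul_zero]
    · rw [hdr j hjr, mul_zero]

end AntitoneSequence

section StandardClasses

variable {r : ℕ}

theorem B10_eq (x y : Fin (r + 1) → ℤ) :
    B10 r x y = x 0 * y 0 - ∑ j : Fin r, x j.succ * y j.succ := by
  simp [B10, Fin.sum_univ_succ, Fin.succ_ne_zero, sub_eq_add_neg]

theorem hstd_zero (i : Fin (r + 1)) :
    hstd r i 0 = 1 + (if 1 < i.val then 1 else 0) + (if 2 < i.val then 1 else 0) := by
  simp only [hstd, Fin.val_zero, if_true]
  split_ifs <;> omega

theorem hstd_last_zero (hr : 3 ≤ r) : hstd r (Fin.last r) 0 = 3 := by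
  simp only [hstd, Fin.val_zero, if_true, Fin.val_last]
  omega

theorem hstd_last_succ (j : Fin r) : hstd r (Fin.last r) j.succ = -1 := by
  simp [hstd, Fin.val_succ]

/-- `tailSum a j = ∑_{i > j} aᵢ` is `d_{j+1}`: minus the coordinate `j + 1` of `∑ aᵢ hᵢ`. -/
def tailSum (a : Fin (r + 1) → ℤ) (j : ℕ) : ℤ :=
  ∑ i : Fin (r + 1), if j < i.val then a i else 0

variable {a : Fin (r + 1) → ℤ}

theorem tailSum_nonneg (ha : ∀ i, 0 ≤ a i) (j : ℕ) : 0 ≤ tailSum a j :=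
  sum_nonneg fun i _ => by split_ifs <;> simp [ha i]

theorem tailSum_antitone (ha : ∀ i, 0 ≤ a i) : Antitone (tailSum a) := fun j k hjk =>
  sum_le_sum fun i _ => by split_ifs <;> first | omega | simp [ha i]

theorem tailSum_of_le {j : ℕ} (hj : r ≤ j) : tailSum a j = 0 :=
  sum_eq_zero fun i _ => if_neg (by omega)

theorem tailSum_sub_tailSum_succ (j : Fin r) :
    tailSum a j - tailSum a (j + 1) = a j.succ := by
  rw [tailSum, tailSum, ← sum_sub_distrib]
  trans ∑ i, if i = j.succ then a i else 0
  · refine sum_congr rfl fun i _ => ?_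
    simp only [Fin.ext_iff, Fin.val_succ]
    split_ifs <;> omega
  · simp

theorem sum_smul_hstd_succ (j : Fin r) :
    (∑ i, a i • hstd r i) j.succ = -tailSum a j := by
  simp only [Finset.sum_apply, Pi.smul_apply, smul_eq_mul, hstd, tailSum, Fin.val_succ,
    ← sum_neg_distrib]
  refine sum_congr rfl fun i _ => ?_
  rw [if_neg j.val.succ_ne_zero]
  split_ifs <;> omega

theorem sum_smul_hstd_zero :
    (∑ i, a i • hstd r i) 0 = a 0 + tailSum a 0 + tailSum a 1 + tailSum a 2 := by
  have h0 : a 0 = ∑ i : Fin (r + 1), if i = 0 then a i else 0 := by simp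
  rw [h0, tailSum, tailSum, tailSum, ← sum_add_distrib, ← sum_add_distrib, ← sum_add_distrib]
  simp only [Finset.sum_apply, Pi.smul_apply, smul_eq_mul, hstd_zero]
  refine sum_congr rfl fun i _ => ?_
  simp only [Fin.ext_iff, Fin.val_zero]
  split_ifs <;> omega

theorem zero_lt_sum_smul_hstd_zero (ha : ∀ i, 0 ≤ a i) (hN : ∑ i, a i • hstd r i ≠ 0) :
    0 < (∑ i, a i • hstd r i) 0 := by
  have h0 := sum_smul_hstd_zero (a := a)
  have hd := tailSum_nonneg ha
  by_contra! hn
  refine hN (funext fun j => ?_)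
  have hd0 : tailSum a 0 = 0 := by linarith [ha 0, hd 0, hd 1, hd 2]
  cases j using Fin.cases with
  | zero =>
    rw [Pi.zero_apply]
    linarith [ha 0, hd 0, hd 1, hd 2]
  | succ j =>
    rw [sum_smul_hstd_succ, Pi.zero_apply, neg_eq_zero]
    exact le_antisymm (hd0 ▸ tailSum_antitone ha (Nat.zero_le j)) (hd j)

theorem three_mul_eq_of_three_mul_tailSum {n : ℤ}
    (h0 : n = a 0 + tailSum a 0 + tailSum a 1 + tailSum a 2)
    (hd : ∀ j, 3 * tailSum a j = if j < 9 then n else 0) (i : Fin (r + 1)) :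
    3 * a i = if i.val = 9 then n else 0 := by
  cases i using Fin.cases with
  | zero =>
    have := hd 0; have := hd 1; have := hd 2
    simp only [Fin.val_zero] at *
    omega
  | succ j =>
    rw [← tailSum_sub_tailSum_succ (a := a), Fin.val_succ]
    have := hd j; have := hd (j + 1)
    split_ifs at * <;> omega

end StandardClasses

theorem stmt10 (r : ℕ) (hr : 3 ≤ r) (a : Fin (r + 1) → ℤ)
    (ha : ∀ i, 0 ≤ a i)
    (N : Fin (r + 1) → ℤ) (hN : N = ∑ i : Fin (r + 1), a i • hstd r i)
    (hNN : B10 r N N = 0)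
    (hNK : B10 r N (hstd r (Fin.last r)) = 0)
    (hN0 : N ≠ 0) :
    9 ≤ r ∧ (∀ i : Fin (r + 1), i.val = 9 → 0 < a i) ∧
      (∀ i : Fin (r + 1), i.val ≠ 9 → a i = 0) := by
  subst hN
  set n := (∑ i, a i • hstd r i) 0
  have h0 : n = a 0 + tailSum a 0 + tailSum a 1 + tailSum a 2 := sum_smul_hstd_zero
  have hsq : ∑ j ∈ range r, tailSum a j ^ 2 = n ^ 2 := by
    simp only [B10_eq, sum_smul_hstd_succ, ← pow_two, neg_sq,
      Fin.sum_univ_eq_sum_range (fun j => tailSum a j ^ 2)] at hNN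
    linarith
  have hsum : ∑ j ∈ range r, tailSum a j = 3 * n := by
    simp only [B10_eq, sum_smul_hstd_succ, hstd_last_zero hr, hstd_last_succ, neg_mul_neg, mul_one,
      Fin.sum_univ_eq_sum_range (tailSum a)] at hNK
    linarith
  have hn : 0 < n := zero_lt_sum_smul_hstd_zero ha hN0
  have hanti := tailSum_antitone ha
  have hnonneg := tailSum_nonneg ha
  have hhead : 3 * tailSum a 0 = n :=
    three_mul_head_eq hr hn hanti hnonneg (by linarith [ha 0]) hsum hsq
  obtain ⟨hr9, hd⟩ := nine_le_and_three_mul_eq hn hanti hnonneg (fun _ => tailSum_of_le) hhead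
    (eq_zero_or_three_mul_eq hanti hnonneg hhead hsum hsq) hsum
  have hcoeff := three_mul_eq_of_three_mul_tailSum h0 hd
  refine ⟨hr9, fun i hi => ?_, fun i hi => ?_⟩
  · have := hcoeff i
    rw [if_pos hi] at this
    omega
  · have := hcoeff i
    rw [if_neg hi] at this
    omega
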